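/- arXiv:2312.05722 — 4 statements merged into one kernel-verified Lean document; each statement's English description precedes it below -/
import Mathlib

section
/- Let α, μ, γ, ν > 0 with α + μ ≠ γ. Define p_A(t) = (α/(α+μ-γ))(e^{-γt} - e^{-(α+μ)t}), f(t) = (-e^{-γt} - ν p_A(t))/(1 + ν p_A(t)), and t* = ln((α+μ)/γ)/(α+μ-γ). Then for every t ≥ 0: f(t) < 0, and -(e^{-γt} + ν p_A(t)) ≤ f(t) ≤ -(e^{-γt} + ν p_A(t))/(1 + ν p_A(t*)). -/
/-- Sign and bounds for the within-host kernel f. -/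
theorem kernel_f_bounds
    (α μ γ ν : ℝ) (hα : 0 < α) (hμ : 0 < μ) (hγ : 0 < γ) (hν : 0 < ν) (hne : α + μ ≠ γ)
    (pA f : ℝ → ℝ)
    (hpA : ∀ t, pA t = (α / (α + μ - γ)) * (Real.exp (-γ * t) - Real.exp (-(α + μ) * t)))
    (hf : ∀ t, f t = (-Real.exp (-γ * t) - ν * pA t) / (1 + ν * pA t))
    (tstar : ℝ) (htstar : tstar = Real.log ((α + μ) / γ) / (α + μ - γ)) :
    ∀ t : ℝ, 0 ≤ t →
      f t < 0 ∧
      -(Real.exp (-γ * t) + ν * pA t) ≤ f t ∧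
      f t ≤ -(Real.exp (-γ * t) + ν * pA t) / (1 + ν * pA tstar) := by
  set s := α + μ with hs
  have hspos : 0 < s := by positivity
  have hd : s - γ ≠ 0 := sub_ne_zero.mpr hne
  set g : ℝ → ℝ := fun t => (Real.exp (-γ * t) - Real.exp (-s * t)) / (s - γ) with hg
  have hpAg : ∀ t, pA t = α * g t := by
    intro t
    rw [hpA t, hg]
    field_simp
  -- exp(d * tstar) = s / γ
  have hdt : (s - γ) * tstar = Real.log (s / γ) := by
    rw [htstar]; field_simp
  have hexpdt : Real.exp ((s - γ) * tstar) = s / γ := by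
    rw [hdt, Real.exp_log (by positivity)]
  -- derivative of g
  have hderiv : ∀ t : ℝ, HasDerivAt g ((s * Real.exp (-s * t) - γ * Real.exp (-γ * t)) / (s - γ)) t := by
    intro t
    have h1 : HasDerivAt (fun t : ℝ => Real.exp (-γ * t)) (-γ * Real.exp (-γ * t)) t := by
      simpa [mul_comm] using ((hasDerivAt_id t).const_mul (-γ)).exp
    have h2 : HasDerivAt (fun t : ℝ => Real.exp (-s * t)) (-s * Real.exp (-s * t)) t := by
      simpa [mul_comm] using ((hasDerivAt_id t).const_mul (-s)).exp
    have := (h1.sub h2).div_const (s - γ)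
    refine this.congr_deriv ?_
    ring
  -- key sign identity
  have hkey : ∀ t : ℝ, s * Real.exp (-s * t) - γ * Real.exp (-γ * t)
      = γ * Real.exp (-s * t) * (Real.exp ((s - γ) * tstar) - Real.exp ((s - γ) * t)) := by
    intro t
    rw [hexpdt, mul_sub]
    have h3 : Real.exp (-s * t) * Real.exp ((s - γ) * t) = Real.exp (-γ * t) := by
      rw [← Real.exp_add]; ring_nf
    have h2 : γ * Real.exp (-s * t) * (s / γ) = s * Real.exp (-s * t) := by
      field_simp
    have h4 : γ * Real.exp (-s * t) * Real.exp ((s - γ) * t) = γ * Real.exp (-γ * t) := by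
      rw [mul_assoc, h3]
    rw [h2, h4]
  have hsign : ∀ t : ℝ, t ≤ tstar → 0 ≤ (s * Real.exp (-s * t) - γ * Real.exp (-γ * t)) / (s - γ) := by
    intro t ht
    rw [hkey t]
    rcases lt_or_gt_of_ne hd.symm with hlt | hgt
    · -- 0 < s - γ
      have : Real.exp ((s - γ) * t) ≤ Real.exp ((s - γ) * tstar) :=
        Real.exp_le_exp.mpr (by nlinarith)
      have h2 : 0 ≤ Real.exp ((s - γ) * tstar) - Real.exp ((s - γ) * t) := by linarith
      positivity
    · -- s - γ < 0
      have hlt' : s - γ < 0 := hgt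
      have h5 : Real.exp ((s - γ) * tstar) ≤ Real.exp ((s - γ) * t) :=
        Real.exp_le_exp.mpr (by nlinarith)
      refine div_nonneg_iff.mpr (Or.inr ⟨?_, hlt'.le⟩)
      exact mul_nonpos_of_nonneg_of_nonpos (by positivity) (by linarith)
  have hsign' : ∀ t : ℝ, tstar ≤ t → (s * Real.exp (-s * t) - γ * Real.exp (-γ * t)) / (s - γ) ≤ 0 := by
    intro t ht
    rw [hkey t]
    rcases lt_or_gt_of_ne hd.symm with hlt | hgt
    · have h5 : Real.exp ((s - γ) * tstar) ≤ Real.exp ((s - γ) * t) :=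
        Real.exp_le_exp.mpr (by nlinarith)
      apply div_nonpos_of_nonpos_of_nonneg _ hlt.le
      exact mul_nonpos_of_nonneg_of_nonpos (by positivity) (by linarith)
    · have hlt' : s - γ < 0 := hgt
      have h5 : Real.exp ((s - γ) * t) ≤ Real.exp ((s - γ) * tstar) :=
        Real.exp_le_exp.mpr (by nlinarith)
      apply div_nonpos_of_nonneg_of_nonpos _ hlt'.le
      exact mul_nonneg (by positivity) (by linarith)
  -- g attains max at tstar
  have hmono : MonotoneOn g (Set.Iic tstar) := by
    apply monotoneOn_of_deriv_nonneg (convex_Iic tstar)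
    · exact fun t _ => (hderiv t).continuousAt.continuousWithinAt
    · intro t ht
      exact ((hderiv t).differentiableAt).differentiableWithinAt
    · intro t ht
      rw [(hderiv t).deriv]
      exact hsign t (le_of_lt (by simpa using ht))
  have hanti : AntitoneOn g (Set.Ici tstar) := by
    apply antitoneOn_of_deriv_nonpos (convex_Ici tstar)
    · exact fun t _ => (hderiv t).continuousAt.continuousWithinAt
    · intro t ht
      exact ((hderiv t).differentiableAt).differentiableWithinAt
    · intro t ht
      rw [(hderiv t).deriv]
      exact hsign' t (le_of_lt (by simpa using ht))
  have hgmax : ∀ t : ℝ, g t ≤ g tstar := by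
    intro t
    rcases le_total t tstar with h | h
    · exact hmono (Set.mem_Iic.mpr h) (Set.mem_Iic.mpr le_rfl) h
    · exact hanti (Set.mem_Ici.mpr le_rfl) (Set.mem_Ici.mpr h) h
  -- pA nonneg for t ≥ 0
  have hgnn : ∀ t : ℝ, 0 ≤ t → 0 ≤ g t := by
    intro t ht
    rw [hg]
    rcases lt_or_gt_of_ne hd.symm with hlt | hgt
    · have : Real.exp (-s * t) ≤ Real.exp (-γ * t) :=
        Real.exp_le_exp.mpr (by nlinarith)
      apply div_nonneg (by linarith) (le_of_lt hlt)
    · have : Real.exp (-γ * t) ≤ Real.exp (-s * t) :=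
        Real.exp_le_exp.mpr (by nlinarith)
      exact div_nonneg_iff.mpr (Or.inr ⟨by linarith, le_of_lt hgt⟩)
  intro t ht
  have hpAt : 0 ≤ pA t := by rw [hpAg]; exact mul_nonneg hα.le (hgnn t ht)
  have hpAle : pA t ≤ pA tstar := by
    rw [hpAg, hpAg]
    exact mul_le_mul_of_nonneg_left (hgmax t) hα.le
  have hpAst : 0 ≤ pA tstar := le_trans hpAt hpAle
  set N : ℝ := -Real.exp (-γ * t) - ν * pA t with hN
  have hNneg : N < 0 := by
    have := Real.exp_pos (-γ * t)
    have : 0 < ν * pA t + Real.exp (-γ * t) := by positivity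
    rw [hN]; linarith
  set D : ℝ := 1 + ν * pA t with hD
  set Ds : ℝ := 1 + ν * pA tstar with hDs
  have hDpos : 0 < D := by rw [hD]; positivity
  have hDspos : 0 < Ds := by rw [hDs]; positivity
  have hD1 : 1 ≤ D := by rw [hD]; nlinarith
  have hDDs : D ≤ Ds := by rw [hD, hDs]; nlinarith
  have hft : f t = N / D := hf t
  refine ⟨?_, ?_, ?_⟩
  · rw [hft]; exact div_neg_of_neg_of_pos hNneg hDpos
  · rw [hft]
    have : -(Real.exp (-γ * t) + ν * pA t) = N := by rw [hN]; ring
    rw [this, le_div_iff₀ hDpos]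
    nlinarith
  · rw [hft]
    have hnum : -(Real.exp (-γ * t) + ν * pA t) = N := by rw [hN]; ring
    rw [hnum]
    rw [div_le_div_iff₀ hDpos hDspos]
    nlinarith
end

section
/- Let α, μ, γ, ν > 0 with α + μ ≠ γ. Define p_A(t) = (α/(α+μ-γ))(e^{-γt} - e^{-(α+μ)t}), f(t) = (-e^{-γt} - ν p_A(t))/(1 + ν p_A(t)), and t* = ln((α+μ)/γ)/(α+μ-γ). Then the limit C₀ = lim_{t→∞} ∫_0^t f(τ) dτ exists as a real number and satisfies -(1/γ)(1 + να/(α+μ)) < C₀ < -(1/γ)(1 + να/(α+μ))/(1 + ν p_A(t*)). -/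
open MeasureTheory Filter

lemma expInt (b : ℝ) (hb : 0 < b) :
    ∫ t in Set.Ioi (0:ℝ), Real.exp (-b * t) = 1 / b := by
  have hderiv : ∀ x ∈ Set.Ici (0:ℝ),
      HasDerivAt (fun t => -(Real.exp (-b*t) / b)) (Real.exp (-b*x)) x := by
    intro x _
    have d1 : HasDerivAt (fun t : ℝ => Real.exp (-b*t)) (-b * Real.exp (-b*x)) x := by
      simpa [mul_comm] using ((hasDerivAt_id x).const_mul (-b)).exp
    have h := (d1.div_const b).neg
    have he : -(-b * Real.exp (-b*x) / b) = Real.exp (-b*x) := by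
      field_simp
    rw [he] at h
    exact h
  have hlim : Tendsto (fun t : ℝ => -(Real.exp (-b*t) / b)) atTop (nhds 0) := by
    have h1 : Tendsto (fun t : ℝ => -b * t) atTop atBot :=
      tendsto_id.const_mul_atTop_of_neg (neg_neg_iff_pos.mpr hb)
    have := (Real.tendsto_exp_atBot.comp h1).neg.div_const b
    simpa [neg_div] using this
  have h2 := integral_Ioi_of_hasDerivAt_of_tendsto' hderiv (exp_neg_integrableOn_Ioi 0 hb) hlim
  simp only [neg_mul] at h2 ⊢
  rw [h2]
  simp

lemma epos {s x : ℝ} (hs : s ≠ 0) (hx : 0 < x) : 0 < (Real.exp (s*x) - 1) / s := by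
  rcases hs.lt_or_gt with h | h
  · apply div_pos_of_neg_of_neg _ h
    simp only [sub_neg]
    exact Real.exp_lt_one_iff.mpr (by nlinarith)
  · apply div_pos _ h
    simp only [sub_pos]
    exact Real.one_lt_exp_iff.mpr (by nlinarith)

lemma eneg {s x : ℝ} (hs : s ≠ 0) (hx : x < 0) : (Real.exp (s*x) - 1) / s < 0 := by
  rcases hs.lt_or_gt with h | h
  · apply div_neg_of_pos_of_neg _ h
    simp only [sub_pos]
    exact Real.one_lt_exp_iff.mpr (by nlinarith)
  · apply div_neg_of_neg_of_pos _ h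
    simp only [sub_neg]
    exact Real.exp_lt_one_iff.mpr (by nlinarith)

/-- Existence and bounds for the constant C₀ = lim_{t→∞} ∫_0^t f(τ) dτ. -/
theorem C0_exists_and_bounds
    (α μ γ ν : ℝ) (hα : 0 < α) (hμ : 0 < μ) (hγ : 0 < γ) (hν : 0 < ν) (hne : α + μ ≠ γ)
    (pA f : ℝ → ℝ)
    (hpA : ∀ t, pA t = (α / (α + μ - γ)) * (Real.exp (-γ * t) - Real.exp (-(α + μ) * t)))
    (hf : ∀ t, f t = (-Real.exp (-γ * t) - ν * pA t) / (1 + ν * pA t))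
    (tstar : ℝ) (htstar : tstar = Real.log ((α + μ) / γ) / (α + μ - γ)) :
    ∃ C₀ : ℝ,
      Tendsto (fun t : ℝ => ∫ τ in (0:ℝ)..t, f τ) atTop (nhds C₀) ∧
      -(1 / γ) * (1 + ν * α / (α + μ)) < C₀ ∧
      C₀ < -(1 / γ) * (1 + ν * α / (α + μ)) / (1 + ν * pA tstar) := by
  have hαμ : 0 < α + μ := by linarith
  set s : ℝ := α + μ - γ with hs_def
  have hs : s ≠ 0 := sub_ne_zero.mpr hne
  have hexp : Real.exp (s * tstar) = (α + μ) / γ := by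
    rw [htstar, ← mul_div_assoc, mul_comm, mul_div_assoc, div_self hs, mul_one]
    exact Real.exp_log (by positivity)
  have htstar_pos : 0 < tstar := by
    rw [htstar]
    rcases hs.lt_or_gt with h | h
    · have h1 : α + μ < γ := by rw [hs_def] at h; linarith
      exact div_pos_of_neg_of_neg
        (Real.log_neg (by positivity) (by rw [div_lt_one hγ]; exact h1)) h
    · have h1 : γ < α + μ := by rw [hs_def] at h; linarith
      exact div_pos (Real.log_pos (by rw [lt_div_iff₀ hγ]; linarith)) h
  have hexp_split : ∀ t : ℝ, Real.exp (-γ * t) = Real.exp (-(α+μ)*t) * Real.exp (s*t) := by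
    intro t
    rw [← Real.exp_add]
    congr 1
    rw [hs_def]; ring
  have hpA' : ∀ t : ℝ, pA t = α * Real.exp (-(α+μ)*t) * ((Real.exp (s*t) - 1)/s) := by
    intro t
    rw [hpA t, hexp_split t]
    field_simp
  have pA_pos : ∀ t : ℝ, 0 < t → 0 < pA t := by
    intro t ht
    rw [hpA' t]
    exact mul_pos (mul_pos hα (Real.exp_pos _)) (epos hs ht)
  have pA0 : pA 0 = 0 := by rw [hpA' 0]; simp
  have pA_nonneg : ∀ t : ℝ, 0 ≤ t → 0 ≤ pA t := by
    intro t ht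
    rcases ht.eq_or_lt with h | h
    · rw [← h, pA0]
    · exact (pA_pos t h).le
  have pA_cont : Continuous pA := by
    have h : pA = fun t => (α / s) * (Real.exp (-γ*t) - Real.exp (-(α+μ)*t)) := funext hpA
    rw [h]
    fun_prop
  -- derivative of pA
  have hDeriv : ∀ t : ℝ, HasDerivAt pA
      (α * γ * Real.exp (-γ*t) * ((Real.exp (s*(tstar - t)) - 1)/s)) t := by
    intro t
    have d1 : HasDerivAt (fun u:ℝ => Real.exp (-γ*u)) (-γ * Real.exp (-γ*t)) t := by
      simpa [mul_comm] using ((hasDerivAt_id t).const_mul (-γ)).exp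
    have d2 : HasDerivAt (fun u:ℝ => Real.exp (-(α+μ)*u)) (-(α+μ) * Real.exp (-(α+μ)*t)) t := by
      simpa [mul_comm] using ((hasDerivAt_id t).const_mul (-(α+μ))).exp
    have d3 := (d1.sub d2).const_mul (α/s)
    have hpAfun : pA = fun u => (α/s) * (Real.exp (-γ*u) - Real.exp (-(α+μ)*u)) := funext hpA
    rw [hpAfun]
    refine d3.congr_deriv ?_
    symm
    have h1 : Real.exp (s*(tstar-t)) = ((α+μ)/γ) * Real.exp (-(s*t)) := by
      rw [mul_sub, ← hexp, ← Real.exp_add, sub_eq_add_neg]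
    have h2 : Real.exp (-(α+μ)*t) = Real.exp (-γ*t) * Real.exp (-(s*t)) := by
      rw [← Real.exp_add]
      congr 1
      rw [hs_def]; ring
    rw [h1, h2]
    field_simp
    ring
  have hmono : StrictMonoOn pA (Set.Icc 0 tstar) := by
    apply strictMonoOn_of_deriv_pos (convex_Icc _ _) pA_cont.continuousOn
    intro t ht
    rw [interior_Icc] at ht
    rw [(hDeriv t).deriv]
    exact mul_pos (by positivity) (epos hs (sub_pos.mpr ht.2))
  have hanti : StrictAntiOn pA (Set.Ici tstar) := by
    apply strictAntiOn_of_deriv_neg (convex_Ici _) pA_cont.continuousOn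
    intro t ht
    rw [interior_Ici] at ht
    rw [(hDeriv t).deriv]
    exact mul_neg_of_pos_of_neg (by positivity) (eneg hs (sub_neg.mpr ht))
  have pA_le : ∀ t : ℝ, 0 ≤ t → pA t ≤ pA tstar := by
    intro t ht
    rcases le_total t tstar with h | h
    · exact hmono.monotoneOn ⟨ht, h⟩ ⟨htstar_pos.le, le_rfl⟩ h
    · exact hanti.antitoneOn (Set.self_mem_Ici) h h
  have pA_lt : ∀ t : ℝ, 0 < t → t < tstar → pA t < pA tstar := by
    intro t h1 h2
    exact hmono ⟨h1.le, h2.le⟩ ⟨htstar_pos.le, le_rfl⟩ h2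
  have hM : 0 < pA tstar := pA_pos tstar htstar_pos
  -- the function g
  set g : ℝ → ℝ := fun t => Real.exp (-γ*t) + ν * pA t with hg_def
  have g_pos : ∀ t : ℝ, 0 ≤ t → 0 < g t := by
    intro t ht
    have h1 := pA_nonneg t ht
    have h2 := Real.exp_pos (-γ*t)
    simp only [hg_def]
    nlinarith
  have hfg : ∀ t : ℝ, f t = -(g t) / (1 + ν * pA t) := by
    intro t
    rw [hf t]
    simp only [hg_def]
    ring
  have hgrw : g = fun t => (1 + ν * (α/s)) * Real.exp (-γ*t) - (ν * (α/s)) * Real.exp (-(α+μ)*t) := by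
    funext t
    simp only [hg_def, hpA t]
    ring
  have gInt : IntegrableOn g (Set.Ioi 0) := by
    rw [hgrw]
    exact ((exp_neg_integrableOn_Ioi 0 hγ).const_mul _).sub
      ((exp_neg_integrableOn_Ioi 0 hαμ).const_mul _)
  have gval : ∫ t in Set.Ioi (0:ℝ), g t = (1/γ) * (1 + ν * α/(α+μ)) := by
    rw [hgrw]
    rw [integral_sub ((exp_neg_integrableOn_Ioi 0 hγ).const_mul _)
      ((exp_neg_integrableOn_Ioi 0 hαμ).const_mul _),
      integral_const_mul, integral_const_mul, expInt γ hγ, expInt (α+μ) hαμ]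
    rw [hs_def]
    field_simp
    ring
  -- integrability of f
  have f_contOn : ContinuousOn f (Set.Ioi 0) := by
    have hfe : f = fun t => (-Real.exp (-γ*t) - ν * pA t) / (1 + ν * pA t) := by
      funext t; exact hf t
    rw [hfe]
    have cexp : Continuous fun t : ℝ => Real.exp (-γ*t) := by fun_prop
    apply ContinuousOn.div
    · exact (cexp.neg.sub (continuous_const.mul pA_cont)).continuousOn
    · exact (continuous_const.add (continuous_const.mul pA_cont)).continuousOn
    · intro t ht
      have := pA_nonneg t (le_of_lt ht)
      have : (0:ℝ) < 1 + ν * pA t := by nlinarith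
      exact ne_of_gt this
  have fInt : IntegrableOn f (Set.Ioi 0) := by
    apply Integrable.mono gInt (f_contOn.aestronglyMeasurable measurableSet_Ioi)
    filter_upwards [ae_restrict_mem measurableSet_Ioi] with t ht
    have ht' : (0:ℝ) < t := ht
    have hgt := g_pos t ht'.le
    have hd : (1:ℝ) ≤ 1 + ν * pA t := by nlinarith [pA_nonneg t ht'.le]
    rw [hfg t, Real.norm_eq_abs, Real.norm_eq_abs, abs_div, abs_neg, abs_of_pos hgt,
      abs_of_pos (lt_of_lt_of_le one_pos hd)]
    exact div_le_self hgt.le hd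
  refine ⟨∫ t in Set.Ioi (0:ℝ), f t, intervalIntegral_tendsto_integral_Ioi 0 fInt tendsto_id,
    ?_, ?_⟩
  · -- lower bound
    have hpos : ∀ t ∈ Set.Ioi (0:ℝ), 0 < f t + g t := by
      intro t ht
      have ht' : (0:ℝ) < t := ht
      have hgt := g_pos t ht'.le
      have hd1 : (1:ℝ) < 1 + ν * pA t := by nlinarith [pA_pos t ht']
      have h := div_lt_self hgt hd1
      rw [hfg t, neg_div]
      linarith
    have key : 0 < ∫ t in Set.Ioi (0:ℝ), (f t + g t) := by
      rw [setIntegral_pos_iff_support_of_nonneg_ae]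
      · refine lt_of_lt_of_le ?_ (measure_mono (fun t ht =>
          ⟨ne_of_gt (hpos t ht), ht⟩ :
          Set.Ioi (0:ℝ) ⊆ Function.support (fun t => f t + g t) ∩ Set.Ioi 0))
        rw [Real.volume_Ioi]
        simp
      · filter_upwards [ae_restrict_mem measurableSet_Ioi] with t ht
        exact (hpos t ht).le
      · exact fInt.add gInt
    rw [integral_add fInt gInt, gval] at key
    linarith
  · -- upper bound
    have h1M : 0 < 1 + ν * pA tstar := by nlinarith
    have hle : ∀ t : ℝ, 0 < t → f t ≤ -(g t)/(1 + ν * pA tstar) := by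
      intro t ht
      have hd : 0 < 1 + ν * pA t := by nlinarith [pA_nonneg t ht.le]
      rw [hfg t, neg_div, neg_div, neg_le_neg_iff, div_le_div_iff₀ h1M hd]
      nlinarith [mul_nonneg (mul_nonneg (g_pos t ht.le).le hν.le)
        (sub_nonneg.mpr (pA_le t ht.le))]
    have hlt : ∀ t : ℝ, 0 < t → t < tstar → f t < -(g t)/(1 + ν * pA tstar) := by
      intro t ht ht2
      have hd : 0 < 1 + ν * pA t := by nlinarith [pA_nonneg t ht.le]
      rw [hfg t, neg_div, neg_div, neg_lt_neg_iff, div_lt_div_iff₀ h1M hd]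
      nlinarith [mul_pos (mul_pos (g_pos t ht.le) hν) (sub_pos.mpr (pA_lt t ht ht2))]
    have h2Int : IntegrableOn (fun t => -(g t)/(1 + ν * pA tstar)) (Set.Ioi 0) :=
      (gInt.neg).div_const _
    have key : 0 < ∫ t in Set.Ioi (0:ℝ), (-(g t)/(1 + ν * pA tstar) - f t) := by
      rw [setIntegral_pos_iff_support_of_nonneg_ae]
      · refine lt_of_lt_of_le ?_ (measure_mono (fun t ht =>
          (⟨ne_of_gt (sub_pos.mpr (hlt t ht.1 ht.2)), ht.1⟩ :
            t ∈ Function.support (fun t => -(g t)/(1 + ν * pA tstar) - f t) ∩ Set.Ioi 0) :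
          Set.Ioo (0:ℝ) tstar ⊆ _))
        rw [Real.volume_Ioo]
        exact ENNReal.ofReal_pos.mpr (by linarith)
      · filter_upwards [ae_restrict_mem measurableSet_Ioi] with t ht
        exact sub_nonneg.mpr (hle t ht)
      · exact h2Int.sub fInt
    rw [integral_sub h2Int fInt] at key
    have hcm : ∫ t in Set.Ioi (0:ℝ), -(g t)/(1 + ν * pA tstar)
        = (-(1/(1 + ν * pA tstar))) * ∫ t in Set.Ioi (0:ℝ), g t := by
      rw [← integral_const_mul]
      congr 1
      funext t
      ring
    rw [hcm, gval] at key
    have : -(1 / γ) * (1 + ν * α / (α + μ)) / (1 + ν * pA tstar)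
        = (-(1/(1 + ν * pA tstar))) * ((1/γ) * (1 + ν * α/(α+μ))) := by ring
    rw [this]
    linarith
end

section
/- Let a, b, c, n, g₂, Q₂, M, u > 0, let N ≥ 0, and let C₀ < 0. Set W* = a c n Q₂ / ((g₂ + a c)(g₂ + n)) and for W ∈ [0, W*) define A(W) = ((N + M u)/(a b C₀ u)) · ( a b |C₀| W / M + ln(1 − g₂(g₂ + n) W / (a c (Q₂ n − (g₂ + n) W))) ). Then the argument of the logarithm is strictly positive on [0, W*), A(0) = 0, A is twice differentiable on (0, W*), and A''(W) > 0 for all W ∈ (0, W*). -/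
/-- Generic core lemma: for `F x = K*(β*x + log(1 - c1*x/(D - p*x)))` with
`K < 0`, `c1, p, D > 0`, at any point where `0 < D - p*W` and `0 < D - (p+c1)*W`,
`F` is twice differentiable with strictly positive second derivative. -/
lemma aux_convex (K β c1 p D : ℝ) (hc1 : 0 < c1) (hp : 0 < p) (hD : 0 < D)
    (hK : K < 0) (F : ℝ → ℝ)
    (hF : ∀ x, F x = K * (β * x + Real.log (1 - c1 * x / (D - p * x))))
    (W : ℝ) (hW1 : 0 < D - p * W) (hW2 : 0 < D - (p + c1) * W) :
    DifferentiableAt ℝ F W ∧ DifferentiableAt ℝ (deriv F) W ∧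
      0 < deriv (deriv F) W := by
  -- the derivative candidate
  set φ : ℝ → ℝ := fun x => K * (β - c1 * D / ((D - p * x) * (D - (p + c1) * x))) with hφdef
  have key : ∀ x : ℝ, 0 < D - p * x → 0 < D - (p + c1) * x → HasDerivAt F (φ x) x := by
    intro x h1 h2
    have h1' : (D - p * x) ≠ 0 := ne_of_gt h1
    have h2' : (D - (p + c1) * x) ≠ 0 := ne_of_gt h2
    have hdd : HasDerivAt (fun y : ℝ => D - p * y) (-(p * 1)) x :=
      ((hasDerivAt_id x).const_mul p).const_sub D
    have hnum : HasDerivAt (fun y : ℝ => c1 * y) (c1 * 1) x :=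
      (hasDerivAt_id x).const_mul c1
    have hq : HasDerivAt (fun y : ℝ => c1 * y / (D - p * y))
        ((c1 * 1 * (D - p * x) - c1 * x * (-(p * 1))) / (D - p * x) ^ 2) x :=
      hnum.div hdd h1'
    have harg : HasDerivAt (fun y : ℝ => 1 - c1 * y / (D - p * y))
        (-((c1 * 1 * (D - p * x) - c1 * x * (-(p * 1))) / (D - p * x) ^ 2)) x :=
      hq.const_sub 1
    have hposrw : (1 : ℝ) - c1 * x / (D - p * x) = (D - (p + c1) * x) / (D - p * x) := by
      rw [eq_div_iff h1', sub_mul, div_mul_cancel₀ _ h1']; ring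
    have hpos : 0 < 1 - c1 * x / (D - p * x) := by
      rw [hposrw]; exact div_pos h2 h1
    have hlog := harg.log (ne_of_gt hpos)
    have hlin : HasDerivAt (fun y : ℝ => β * y) (β * 1) x := (hasDerivAt_id x).const_mul β
    have hsum := (hlin.add hlog).const_mul K
    have hFeq : F = fun y => K * (β * y + Real.log (1 - c1 * y / (D - p * y))) :=
      funext hF
    rw [hFeq]
    refine HasDerivAt.congr_deriv hsum ?_
    rw [hφdef, hposrw]
    field_simp
    ring
  refine ⟨(key W hW1 hW2).differentiableAt, ?_, ?_⟩ <;>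
  · -- both remaining goals need the local formula for deriv F and deriv φ
    have hU : IsOpen {x : ℝ | 0 < D - p * x ∧ 0 < D - (p + c1) * x} := by
      have c1' : Continuous fun x : ℝ => D - p * x := by continuity
      have c2' : Continuous fun x : ℝ => D - (p + c1) * x := by continuity
      exact (isOpen_lt continuous_const c1').inter (isOpen_lt continuous_const c2')
    have hWU : W ∈ {x : ℝ | 0 < D - p * x ∧ 0 < D - (p + c1) * x} := ⟨hW1, hW2⟩
    have hev : deriv F =ᶠ[nhds W] φ :=
      Filter.eventuallyEq_of_mem (hU.mem_nhds hWU) fun x hx => (key x hx.1 hx.2).deriv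
    -- derivative of φ
    have hprodpos : 0 < (D - p * W) * (D - (p + c1) * W) := mul_pos hW1 hW2
    have hdd : HasDerivAt (fun y : ℝ => D - p * y) (-(p * 1)) W :=
      ((hasDerivAt_id W).const_mul p).const_sub D
    have hmm : HasDerivAt (fun y : ℝ => D - (p + c1) * y) (-((p + c1) * 1)) W :=
      ((hasDerivAt_id W).const_mul (p + c1)).const_sub D
    have hprod := hdd.mul hmm
    have hinv := hprod.inv (ne_of_gt hprodpos)
    have hscal := hinv.const_mul (K * c1 * D)
    have hφeq : φ = fun y => K * β - K * c1 * D * ((D - p * y) * (D - (p + c1) * y))⁻¹ := by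
      funext y; rw [hφdef]; ring
    have hφhas : HasDerivAt φ
        (-((K * c1 * D) *
          (-(-(p * 1) * (D - (p + c1) * W) + (D - p * W) * -((p + c1) * 1)) /
            ((D - p * W) * (D - (p + c1) * W)) ^ 2))) W := by
      rw [hφeq]
      exact hscal.const_sub (K * β)
    first
    | exact hφhas.differentiableAt.congr_of_eventuallyEq hev
    | · rw [hev.deriv_eq, hφhas.deriv]
        have hE : -(p * 1) * (D - (p + c1) * W) + (D - p * W) * -((p + c1) * 1) < 0 := by
          nlinarith
        have hKcD : K * c1 * D < 0 :=
          mul_neg_of_neg_of_pos (mul_neg_of_neg_of_pos hK hc1) hD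
        have h3 : 0 < -(-(p * 1) * (D - (p + c1) * W) + (D - p * W) * -((p + c1) * 1)) /
            ((D - p * W) * (D - (p + c1) * W)) ^ 2 :=
          div_pos (neg_pos.mpr hE) (pow_pos hprodpos 2)
        exact neg_pos.mpr (mul_neg_of_neg_of_pos hKcD h3)


/-- Properties of the map A(W) relating the village- and forest-patch
    constant Fourier coefficients: A(0)=0 and A is strictly convex on (0, W*). -/
theorem A_convexity
    (a b c n g₂ Q₂ M u N C₀ : ℝ)
    (ha : 0 < a) (hb : 0 < b) (hc : 0 < c) (hn : 0 < n) (hg₂ : 0 < g₂)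
    (hQ₂ : 0 < Q₂) (hM : 0 < M) (hu : 0 < u) (hN : 0 ≤ N) (hC₀ : C₀ < 0)
    (Wstar : ℝ) (hWstar : Wstar = a * c * n * Q₂ / ((g₂ + a * c) * (g₂ + n)))
    (A : ℝ → ℝ)
    (hA : ∀ W, A W = ((N + M * u) / (a * b * C₀ * u)) *
        (a * b * |C₀| * W / M +
          Real.log (1 - g₂ * (g₂ + n) * W / (a * c * (Q₂ * n - (g₂ + n) * W))))) :
    (∀ W ∈ Set.Ico (0:ℝ) Wstar,
      0 < 1 - g₂ * (g₂ + n) * W / (a * c * (Q₂ * n - (g₂ + n) * W))) ∧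
    A 0 = 0 ∧
    (∀ W ∈ Set.Ioo (0:ℝ) Wstar,
      DifferentiableAt ℝ A W ∧
      DifferentiableAt ℝ (deriv A) W ∧
      0 < deriv (deriv A) W) := by
  have hq : 0 < a * c * (g₂ + n) + g₂ * (g₂ + n) := by positivity
  -- for W < Wstar, the key positivity facts
  have hmain : ∀ W : ℝ, 0 ≤ W → W < Wstar →
      0 < a * c * Q₂ * n - (a * c * (g₂ + n) + g₂ * (g₂ + n)) * W ∧
      0 < a * c * Q₂ * n - (a * c * (g₂ + n)) * W := by
    intro W hW0 hWlt
    rw [hWstar] at hWlt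
    have heq : a * c * n * Q₂ / ((g₂ + a * c) * (g₂ + n)) =
        a * c * Q₂ * n / (a * c * (g₂ + n) + g₂ * (g₂ + n)) := by
      ring
    rw [heq, lt_div_iff₀ hq] at hWlt
    constructor
    · nlinarith
    · nlinarith [mul_nonneg (mul_nonneg hg₂.le (by linarith : (0:ℝ) ≤ g₂ + n)) hW0]
  refine ⟨?_, ?_, ?_⟩
  · -- positivity of the log argument
    rintro W ⟨hW0, hWlt⟩
    obtain ⟨hW2, hW1⟩ := hmain W hW0 hWlt
    have hden : 0 < a * c * (Q₂ * n - (g₂ + n) * W) := by nlinarith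
    rw [sub_pos, div_lt_one hden]
    nlinarith
  · -- A 0 = 0
    rw [hA 0]
    norm_num
  · -- twice differentiability and strict convexity
    rintro W ⟨hW0, hWlt⟩
    obtain ⟨hW2, hW1⟩ := hmain W hW0.le hWlt
    have hc1 : 0 < g₂ * (g₂ + n) := by positivity
    have hp : 0 < a * c * (g₂ + n) := by positivity
    have hD : 0 < a * c * Q₂ * n := by positivity
    have hK : (N + M * u) / (a * b * C₀ * u) < 0 :=
      div_neg_of_pos_of_neg (add_pos_of_nonneg_of_pos hN (mul_pos hM hu))
        (mul_neg_of_neg_of_pos (mul_neg_of_pos_of_neg (mul_pos ha hb) hC₀) hu)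
    have hF : ∀ x, A x = ((N + M * u) / (a * b * C₀ * u)) *
        ((a * b * |C₀| / M) * x +
          Real.log (1 - g₂ * (g₂ + n) * x /
            (a * c * Q₂ * n - a * c * (g₂ + n) * x))) := by
      intro x
      rw [hA x]
      have e2 : 1 - g₂ * (g₂ + n) * x / (a * c * (Q₂ * n - (g₂ + n) * x)) =
          1 - g₂ * (g₂ + n) * x / (a * c * Q₂ * n - a * c * (g₂ + n) * x) := by
        ring
      rw [e2]
      ring
    have := aux_convex ((N + M * u) / (a * b * C₀ * u)) (a * b * |C₀| / M)
      (g₂ * (g₂ + n)) (a * c * (g₂ + n)) (a * c * Q₂ * n)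
      hc1 hp hD hK A hF W ?_ ?_
    · exact this
    · exact hW1
    · exact hW2
end

section
/- Let a, b, c, n, g₁, g₂, Q₁, Q₂ > 0, let M ∈ (0, 1) and N = 1 − M, let u, v be real numbers with u − |v| > 0 and u + |v| < 1, and let C₀ < 0. Set W* = a c n Q₂/((g₂ + a c)(g₂ + n)), and for W ∈ [0, W*) define A(W) = ((N + M u)/(a b C₀ u)) · (a b |C₀| W/M + ln(1 − g₂(g₂+n)W/(a c (Q₂ n − (g₂+n)W)))), F₁(W) = (N − N exp(a b |C₀| A(W)/(N + M u)) + M(u+v) g₂(g₂+n) W/(a c (Q₂ n − (g₂+n) W)))/(N + (u+v) M), F₂(W) = (N − N exp(a b |C₀| A(W)/(N + M u)) + M(u−v) g₂(g₂+n) W/(a c (Q₂ n − (g₂+n) W)))/(N + (u−v) M), and, whenever n Q₁ − (g₁+n) A(W) ≠ 0, H(W) = 2 g₁(g₁+n) A(W)/(a c (n Q₁ − (g₁+n) A(W))). If M g₂ (g₂ + n) < a² b c n |C₀| Q₂, then there exists W ∈ (0, W*) with n Q₁ − (g₁+n) A(W) ≠ 0 such that F₁(W) + F₂(W) = H(W).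 -/
set_option maxHeartbeats 4000000 in
/-- If M g₂(g₂+n) < a²bcn|C₀|Q₂ then the nonlinear limiting-state equation
    F₁(W) + F₂(W) = H(W) has an endemic solution. -/
theorem endemic_solution_exists
    (a b c n g₁ g₂ Q₁ Q₂ M N u v C₀ : ℝ)
    (ha : 0 < a) (hb : 0 < b) (hc : 0 < c) (hn : 0 < n)
    (hg₁ : 0 < g₁) (hg₂ : 0 < g₂) (hQ₁ : 0 < Q₁) (hQ₂ : 0 < Q₂)
    (hM : M ∈ Set.Ioo (0:ℝ) 1) (hN : N = 1 - M)
    (huv₁ : 0 < u - |v|) (huv₂ : u + |v| < 1) (hC₀ : C₀ < 0)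
    (Wstar : ℝ) (hWstar : Wstar = a * c * n * Q₂ / ((g₂ + a * c) * (g₂ + n)))
    (A F₁ F₂ H : ℝ → ℝ)
    (hA : ∀ W, A W = ((N + M * u) / (a * b * C₀ * u)) *
        (a * b * |C₀| * W / M +
          Real.log (1 - g₂ * (g₂ + n) * W / (a * c * (Q₂ * n - (g₂ + n) * W)))))
    (hF₁ : ∀ W, F₁ W =
        (N - N * Real.exp (a * b * |C₀| * A W / (N + M * u)) +
          M * (u + v) * g₂ * (g₂ + n) * W / (a * c * (Q₂ * n - (g₂ + n) * W)))
        / (N + (u + v) * M))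
    (hF₂ : ∀ W, F₂ W =
        (N - N * Real.exp (a * b * |C₀| * A W / (N + M * u)) +
          M * (u - v) * g₂ * (g₂ + n) * W / (a * c * (Q₂ * n - (g₂ + n) * W)))
        / (N + (u - v) * M))
    (hH : ∀ W, n * Q₁ - (g₁ + n) * A W ≠ 0 →
        H W = 2 * g₁ * (g₁ + n) * A W / (a * c * (n * Q₁ - (g₁ + n) * A W)))
    (hcond : M * g₂ * (g₂ + n) < a ^ 2 * b * c * n * |C₀| * Q₂) :
    ∃ W ∈ Set.Ioo (0:ℝ) Wstar,
        n * Q₁ - (g₁ + n) * A W ≠ 0 ∧ F₁ W + F₂ W = H W := by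
  obtain ⟨hM0, hM1⟩ := hM
  have hN0 : 0 < N := by rw [hN]; linarith
  have hvu : |v| < u := by linarith
  have hu : 0 < u := lt_of_le_of_lt (abs_nonneg v) hvu
  have hupv : 0 < u + v := by have := neg_abs_le v; linarith
  have humv : 0 < u - v := by have := le_abs_self v; linarith
  have habs : |C₀| = -C₀ := abs_of_neg hC₀
  have hC0 : 0 < |C₀| := abs_pos.mpr (ne_of_lt hC₀)
  have hac : 0 < a * c := mul_pos ha hc
  have hg2n : 0 < g₂ + n := by linarith
  have hg1n : 0 < g₁ + n := by linarith
  have hacg : 0 < a * c + g₂ := by linarith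
  have hk0 : 0 < a * b * |C₀| := by positivity
  set k := a * b * |C₀| with hkdef
  clear_value k
  have hWs0 : 0 < Wstar := by rw [hWstar]; positivity
  have hNMu : 0 < N + M * u := by nlinarith
  -- key algebraic identity for the denominator
  have hRid : ∀ W : ℝ, a * c * (Q₂ * n - (g₂ + n) * W) - g₂ * (g₂ + n) * W
      = (a * c + g₂) * (g₂ + n) * (Wstar - W) := by
    intro W; rw [hWstar]; field_simp; ring
  -- denominator positivity for all W ≤ Wstar
  have hDpos : ∀ W : ℝ, W ≤ Wstar → 0 < a * c * (Q₂ * n - (g₂ + n) * W) := by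
    intro W hW
    have e2 : a * c * (Q₂ * n - (g₂ + n) * Wstar) = g₂ * (g₂ + n) * Wstar := by
      linear_combination hRid Wstar
    have e1 : a * c * (Q₂ * n - (g₂ + n) * W)
        = a * c * (Q₂ * n - (g₂ + n) * Wstar) + a * c * ((g₂ + n) * (Wstar - W)) := by
      ring
    have h3 : 0 ≤ a * c * ((g₂ + n) * (Wstar - W)) :=
      mul_nonneg hac.le (mul_nonneg hg2n.le (sub_nonneg.mpr hW))
    have h4 : 0 < g₂ * (g₂ + n) * Wstar := by positivity
    rw [e1, e2]
    linarith
  -- positivity of 1 - s(W) for all W < Wstar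
  have h1q : ∀ W : ℝ, W < Wstar →
      0 < 1 - g₂ * (g₂ + n) * W / (a * c * (Q₂ * n - (g₂ + n) * W)) := by
    intro W hW
    have hD := hDpos W hW.le
    rw [sub_pos, div_lt_one hD]
    linarith [hRid W, mul_pos (mul_pos hacg hg2n) (sub_pos.mpr hW)]
  -- rewrite A
  have hcoef : (N + M * u) / (a * b * C₀ * u) = -((N + M * u) / (k * u)) := by
    have hku : k * u = -(a * b * C₀ * u) := by rw [hkdef, habs]; ring
    rw [hku, div_neg, neg_neg]
  have hAeq : ∀ W : ℝ, A W = -((N + M * u) / (k * u)) *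
      (k * W / M +
        Real.log (1 - g₂ * (g₂ + n) * W / (a * c * (Q₂ * n - (g₂ + n) * W)))) := by
    intro W; rw [hA W, hcoef]
  have hκ : 0 < (N + M * u) / (k * u) := div_pos hNMu (mul_pos hk0 hu)
  -- the exponent in F₁/F₂
  have hEarg : ∀ W : ℝ, k * A W / (N + M * u) =
      -(k * W / M +
        Real.log (1 - g₂ * (g₂ + n) * W / (a * c * (Q₂ * n - (g₂ + n) * W)))) / u := by
    intro W
    rw [hAeq W]
    set L := k * W / M +
      Real.log (1 - g₂ * (g₂ + n) * W / (a * c * (Q₂ * n - (g₂ + n) * W))) with hLd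
    field_simp
  -- the threshold W₊
  have hWsid : Wstar * ((g₂ + a * c) * (g₂ + n)) = a * c * n * Q₂ := by
    rw [hWstar]; field_simp
  have hMg : M * g₂ < k * (a * c + g₂) * Wstar := by
    have h2 : M * g₂ * (g₂ + n) < k * (a * c * n * Q₂) := by
      have : a ^ 2 * b * c * n * |C₀| * Q₂ = k * (a * c * n * Q₂) := by
        rw [hkdef]; ring
      linarith
    have h2' : M * g₂ * (g₂ + n) < k * (a * c + g₂) * Wstar * (g₂ + n) := by
      calc M * g₂ * (g₂ + n) < k * (a * c * n * Q₂) := h2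
        _ = k * (a * c + g₂) * Wstar * (g₂ + n) := by rw [← hWsid]; ring
    exact lt_of_mul_lt_mul_right h2' hg2n.le
  set Wp := Wstar - M * g₂ / (k * (a * c + g₂)) with hWpdef
  clear_value Wp
  have hWp0 : 0 < Wp := by
    rw [hWpdef, sub_pos, div_lt_iff₀ (mul_pos hk0 hacg)]
    calc M * g₂ < k * (a * c + g₂) * Wstar := hMg
      _ = Wstar * (k * (a * c + g₂)) := by ring
  have hWpWs : Wp < Wstar := by
    rw [hWpdef]
    have : 0 < M * g₂ / (k * (a * c + g₂)) := by positivity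
    linarith
  -- positivity of L(W) = kW/M + log(1-s(W)) on (0, Wp)
  have hLpos : ∀ W : ℝ, 0 < W → W < Wp →
      0 < k * W / M +
        Real.log (1 - g₂ * (g₂ + n) * W / (a * c * (Q₂ * n - (g₂ + n) * W))) := by
    intro W h0 h1
    have hWWs : W < Wstar := h1.trans hWpWs
    have hD := hDpos W hWWs.le
    have hx0 := h1q W hWWs
    set x := 1 - g₂ * (g₂ + n) * W / (a * c * (Q₂ * n - (g₂ + n) * W)) with hxdef
    have hlog : 1 - x⁻¹ ≤ Real.log x := Real.one_sub_inv_le_log_of_pos hx0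
    have hR0 : 0 < (a * c + g₂) * (g₂ + n) * (Wstar - W) :=
      mul_pos (mul_pos hacg hg2n) (sub_pos.mpr hWWs)
    have hx : x = ((a * c + g₂) * (g₂ + n) * (Wstar - W)) /
        (a * c * (Q₂ * n - (g₂ + n) * W)) := by
      rw [hxdef, eq_div_iff hD.ne']
      have := hRid W
      rw [sub_mul, one_mul, div_mul_cancel₀ _ hD.ne']
      linarith
    have hgap : M * g₂ / (k * (a * c + g₂)) < Wstar - W := by
      rw [hWpdef] at h1; linarith
    have hgap' : M * g₂ < (Wstar - W) * (k * (a * c + g₂)) :=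
      (div_lt_iff₀ (mul_pos hk0 hacg)).mp hgap
    have hkR : M * (g₂ * (g₂ + n)) < k * ((a * c + g₂) * (g₂ + n) * (Wstar - W)) := by
      have := mul_lt_mul_of_pos_right hgap' hg2n
      nlinarith [this]
    have hden' : a * c * (Q₂ * n - (g₂ + n) * W)
        = (a * c + g₂) * (g₂ + n) * (Wstar - W) + g₂ * (g₂ + n) * W := by
      linarith [hRid W]
    have key : k * W / M + (1 - x⁻¹)
        = (k * ((a * c + g₂) * (g₂ + n) * (Wstar - W)) - M * (g₂ * (g₂ + n))) * W /
          (M * ((a * c + g₂) * (g₂ + n) * (Wstar - W))) := by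
      rw [hx, hden']
      rw [inv_div]
      have hWW : Wstar - W ≠ 0 := (sub_pos.mpr hWWs).ne'
      field_simp
      ring
    have hpos : 0 < k * W / M + (1 - x⁻¹) := by
      rw [key]
      exact div_pos (mul_pos (sub_pos.mpr hkR) h0) (mul_pos hM0 hR0)
    linarith
  -- facts on (0, Wp): A < 0, exp < 1, F₁ > 0, F₂ > 0
  have hAneg : ∀ W : ℝ, 0 < W → W < Wp → A W < 0 := by
    intro W h0 h1
    rw [hAeq W]
    have hL := hLpos W h0 h1
    linarith [mul_pos hκ hL]
  have hexp : ∀ W : ℝ, 0 < W → W < Wp →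
      Real.exp (k * A W / (N + M * u)) < 1 := by
    intro W h0 h1
    rw [hEarg W, Real.exp_lt_one_iff]
    have hL := hLpos W h0 h1
    exact div_neg_of_neg_of_pos (neg_neg_iff_pos.mpr hL) hu
  have hF₁pos : ∀ W : ℝ, 0 < W → W < Wp → 0 < F₁ W := by
    intro W h0 h1
    rw [hF₁ W]
    have hD := hDpos W (h1.trans hWpWs).le
    have hq0 : 0 ≤ M * (u + v) * g₂ * (g₂ + n) * W / (a * c * (Q₂ * n - (g₂ + n) * W)) :=
      div_nonneg (by positivity) hD.le
    have hE := hexp W h0 h1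
    apply div_pos
    · linarith [mul_pos hN0 (sub_pos.mpr hE)]
    · linarith [mul_pos hupv hM0]
  have hF₂pos : ∀ W : ℝ, 0 < W → W < Wp → 0 < F₂ W := by
    intro W h0 h1
    rw [hF₂ W]
    have hD := hDpos W (h1.trans hWpWs).le
    have hq0 : 0 ≤ M * (u - v) * g₂ * (g₂ + n) * W / (a * c * (Q₂ * n - (g₂ + n) * W)) :=
      div_nonneg (by positivity) hD.le
    have hE := hexp W h0 h1
    apply div_pos
    · linarith [mul_pos hN0 (sub_pos.mpr hE)]
    · linarith [mul_pos humv hM0]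
  -- A tends to +∞ as W → Wstar⁻
  have hDWs : a * c * (Q₂ * n - (g₂ + n) * Wstar) ≠ 0 := (hDpos Wstar le_rfl).ne'
  have hlimA : Filter.Tendsto A (nhdsWithin Wstar (Set.Iio Wstar)) Filter.atTop := by
    have h1 : Filter.Tendsto
        (fun W => 1 - g₂ * (g₂ + n) * W / (a * c * (Q₂ * n - (g₂ + n) * W)))
        (nhdsWithin Wstar (Set.Iio Wstar)) (nhdsWithin 0 (Set.Ioi 0)) := by
      apply tendsto_nhdsWithin_of_tendsto_nhds_of_eventually_within
      · have hcont : ContinuousAt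
            (fun W => 1 - g₂ * (g₂ + n) * W / (a * c * (Q₂ * n - (g₂ + n) * W))) Wstar := by
          apply ContinuousAt.sub continuousAt_const
          exact ContinuousAt.div (by fun_prop) (by fun_prop) hDWs
        have hval : 1 - g₂ * (g₂ + n) * Wstar / (a * c * (Q₂ * n - (g₂ + n) * Wstar)) = 0 := by
          rw [sub_eq_zero, eq_comm, div_eq_one_iff_eq hDWs]
          linear_combination - hRid Wstar
        have := Filter.Tendsto.mono_left hcont.tendsto
          (nhdsWithin_le_nhds (s := Set.Iio Wstar))
        rwa [hval] at this
      · filter_upwards [self_mem_nhdsWithin] with W hW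
        exact h1q W hW
    have h2 : Filter.Tendsto
        (fun W => Real.log (1 - g₂ * (g₂ + n) * W / (a * c * (Q₂ * n - (g₂ + n) * W))))
        (nhdsWithin Wstar (Set.Iio Wstar)) Filter.atBot :=
      Real.tendsto_log_nhdsGT_zero.comp h1
    have h3 : Filter.Tendsto
        (fun W => k * W / M + Real.log
          (1 - g₂ * (g₂ + n) * W / (a * c * (Q₂ * n - (g₂ + n) * W))))
        (nhdsWithin Wstar (Set.Iio Wstar)) Filter.atBot := by
      apply Filter.tendsto_atBot_add_left_of_ge' _ (k * Wstar / M) _ h2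
      filter_upwards [self_mem_nhdsWithin] with W hW
      have : W ≤ Wstar := le_of_lt hW
      have hkM : 0 < k / M := div_pos hk0 hM0
      calc k * W / M = (k / M) * W := by ring
        _ ≤ (k / M) * Wstar := by nlinarith
        _ = k * Wstar / M := by ring
    have h4 := (Filter.tendsto_neg_atTop_iff.mpr h3).const_mul_atTop hκ
    apply h4.congr
    intro W
    rw [hAeq W]
    ring
  -- get W₂ close to Wstar with A W₂ large
  set T := n * Q₁ / (g₁ + n) with hTdef
  clear_value T
  have hT0 : 0 < T := by rw [hTdef]; positivity
  set Wm := Wp / 2 with hWmdef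
  clear_value Wm
  have hWm0 : 0 < Wm := by rw [hWmdef]; linarith
  have hWmWp : Wm < Wp := by rw [hWmdef]; linarith
  have hWmWs : Wm < Wstar := hWmWp.trans hWpWs
  obtain ⟨W₂, hW₂T, hW₂mem⟩ :=
    ((hlimA.eventually_gt_atTop T).and
      (Filter.eventually_of_mem (Ioo_mem_nhdsLT hWmWs) fun x hx => hx)).exists
  obtain ⟨hWmW₂, hW₂Ws⟩ := hW₂mem
  -- continuity on S = Icc Wm W₂
  have hSsub : ∀ x ∈ Set.Icc Wm W₂, x < Wstar := fun x hx => lt_of_le_of_lt hx.2 hW₂Ws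
  have hcont1 : ContinuousOn
      (fun W => 1 - g₂ * (g₂ + n) * W / (a * c * (Q₂ * n - (g₂ + n) * W)))
      (Set.Icc Wm W₂) := by
    apply ContinuousOn.sub continuousOn_const
    exact ContinuousOn.div (by fun_prop) (by fun_prop)
      fun x hx => (hDpos x (hSsub x hx).le).ne'
  have hcontA : ContinuousOn A (Set.Icc Wm W₂) := by
    have : ContinuousOn (fun W => -((N + M * u) / (k * u)) *
        (k * W / M + Real.log
          (1 - g₂ * (g₂ + n) * W / (a * c * (Q₂ * n - (g₂ + n) * W)))))
        (Set.Icc Wm W₂) := by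
      apply ContinuousOn.mul continuousOn_const
      apply ContinuousOn.add (by fun_prop)
      exact ContinuousOn.log hcont1 fun x hx => (h1q x (hSsub x hx)).ne'
    exact this.congr fun x _ => hAeq x
  have hcontE : ContinuousOn (fun W => Real.exp (k * A W / (N + M * u)))
      (Set.Icc Wm W₂) :=
    Real.continuous_exp.comp_continuousOn
      ((continuousOn_const.mul hcontA).div_const _)
  have hcontF₁ : ContinuousOn F₁ (Set.Icc Wm W₂) := by
    have : ContinuousOn (fun W =>
        (N - N * Real.exp (k * A W / (N + M * u)) +
          M * (u + v) * g₂ * (g₂ + n) * W / (a * c * (Q₂ * n - (g₂ + n) * W)))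
        / (N + (u + v) * M)) (Set.Icc Wm W₂) := by
      apply ContinuousOn.div_const
      apply ContinuousOn.add
      · exact continuousOn_const.sub (continuousOn_const.mul hcontE)
      · exact ContinuousOn.div (by fun_prop) (by fun_prop)
          fun x hx => (hDpos x (hSsub x hx).le).ne'
    exact this.congr fun x _ => hF₁ x
  have hcontF₂ : ContinuousOn F₂ (Set.Icc Wm W₂) := by
    have : ContinuousOn (fun W =>
        (N - N * Real.exp (k * A W / (N + M * u)) +
          M * (u - v) * g₂ * (g₂ + n) * W / (a * c * (Q₂ * n - (g₂ + n) * W)))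
        / (N + (u - v) * M)) (Set.Icc Wm W₂) := by
      apply ContinuousOn.div_const
      apply ContinuousOn.add
      · exact continuousOn_const.sub (continuousOn_const.mul hcontE)
      · exact ContinuousOn.div (by fun_prop) (by fun_prop)
          fun x hx => (hDpos x (hSsub x hx).le).ne'
    exact this.congr fun x _ => hF₂ x
  -- IVT for A : find W₀ with A W₀ = T
  have hAWm : A Wm < 0 := hAneg Wm hWm0 hWmWp
  obtain ⟨W₀, hW₀mem, hAW₀⟩ :=
    intermediate_value_Icc hWmW₂.le hcontA ⟨(hAWm.trans hT0).le, hW₂T.le⟩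
  -- the function Ψ
  set Ψ : ℝ → ℝ := fun W =>
    (F₁ W + F₂ W) * (a * c * (n * Q₁ - (g₁ + n) * A W)) - 2 * g₁ * (g₁ + n) * A W
    with hΨdef
  clear_value Ψ
  have hcontΨ : ContinuousOn Ψ (Set.Icc Wm W₂) := by
    rw [hΨdef]
    apply ContinuousOn.sub
    · exact (hcontF₁.add hcontF₂).mul
        (continuousOn_const.mul (continuousOn_const.sub (continuousOn_const.mul hcontA)))
    · exact continuousOn_const.mul hcontA
  have hΨWm : 0 < Ψ Wm := by
    have h1 := hF₁pos Wm hWm0 hWmWp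
    have h2 := hF₂pos Wm hWm0 hWmWp
    have hX : 0 < F₁ Wm + F₂ Wm := by linarith
    have hY : 0 < a * c * (n * Q₁ - (g₁ + n) * A Wm) := by
      apply mul_pos hac
      linarith [mul_pos hg1n (neg_pos.mpr hAWm), mul_pos hn hQ₁]
    have hZ : 2 * g₁ * (g₁ + n) * A Wm < 0 := by
      linarith [mul_pos (mul_pos (by linarith : (0:ℝ) < 2 * g₁) hg1n) (neg_pos.mpr hAWm)]
    rw [hΨdef]
    simp only
    linarith [mul_pos hX hY, hZ]
  have hΨW₀ : Ψ W₀ < 0 := by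
    rw [hΨdef]
    simp only
    rw [hAW₀]
    have hz : n * Q₁ - (g₁ + n) * T = 0 := by
      rw [hTdef]; field_simp; ring
    rw [hz, mul_zero, mul_zero, zero_sub, neg_lt, neg_zero]
    have : 0 < 2 * g₁ * (g₁ + n) * T := by positivity
    linarith
  -- IVT for Ψ
  have hW₀S : Set.Icc Wm W₀ ⊆ Set.Icc Wm W₂ := Set.Icc_subset_Icc le_rfl hW₀mem.2
  obtain ⟨W, hWmem, hΨW⟩ :=
    intermediate_value_Icc' hW₀mem.1 (hcontΨ.mono hW₀S) ⟨hΨW₀.le, hΨWm.le⟩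
  have hW0 : 0 < W := lt_of_lt_of_le hWm0 hWmem.1
  have hWWs : W < Wstar := lt_of_le_of_lt (hWmem.2.trans hW₀mem.2) hW₂Ws
  have hΨW' : (F₁ W + F₂ W) * (a * c * (n * Q₁ - (g₁ + n) * A W))
      - 2 * g₁ * (g₁ + n) * A W = 0 := by rw [hΨdef] at hΨW; exact hΨW
  have hdenne : n * Q₁ - (g₁ + n) * A W ≠ 0 := by
    intro h
    have h2 : a * c * (n * Q₁ - (g₁ + n) * A W) = 0 := by rw [h, mul_zero]
    rw [h2, mul_zero, zero_sub, neg_eq_zero] at hΨW'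
    rcases mul_eq_zero.mp hΨW' with h4 | h4
    · linarith [mul_pos (mul_pos (by linarith : (0:ℝ) < 2 * g₁) hg1n) (mul_pos hn hQ₁), h4,
        mul_pos (by linarith : (0:ℝ) < 2 * g₁) hg1n]
    · rw [h4, mul_zero, sub_zero] at h
      linarith [mul_pos hn hQ₁]
  refine ⟨W, ⟨hW0, hWWs⟩, hdenne, ?_⟩
  rw [hH W hdenne, eq_div_iff (mul_ne_zero hac.ne' hdenne)]
  linarith [hΨW']
end
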